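/- Weak duality between the primal CCNN problem with hinge loss and its dual (finite-dimensional content of Theorem 1): let d, p, n be positive integers, Φ₁,…,Φₙ ∈ ℝ^{d×p}, y₁,…,yₙ ∈ {−1, 1}, c > 0, and let α₁,…,αₙ ∈ ℝ satisfy 0 ≤ αᵢ ≤ c for all i and ‖Σᵢ αᵢyᵢΦᵢ‖₂ ≤ 1. Then for every A ∈ ℝ^{d×p}: Σᵢ αᵢ ≤ ‖A‖_* + c Σᵢ max(0, 1 − yᵢ·Tr(ΦᵢᵀA)). That is, the dual objective value of any dual-feasible α is at most the primal objective value of any A. -/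

import Mathlib

open Matrix

/-- The spectral norm (ℓ²→ℓ² operator norm, largest singular value) of a real matrix. -/
noncomputable def matSpectralNorm {m n : Type*} [Fintype m] [Fintype n] [DecidableEq n]
    (M : Matrix m n ℝ) : ℝ :=
  ‖LinearMap.toContinuousLinearMap (Matrix.toEuclideanLin M)‖

theorem isHermitian_transpose_mul_self_real {m n : Type*} [Fintype m] [Fintype n]
    (M : Matrix m n ℝ) : (Mᵀ * M).IsHermitian := by
  rw [← Matrix.conjTranspose_eq_transpose_of_trivial]
  exact Matrix.isHermitian_conjTranspose_mul_self M

/-- The nuclear norm of a real matrix: the sum of the square roots of the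
eigenvalues of `Mᵀ * M`, i.e. the sum of the singular values of `M`. -/
noncomputable def nuclearNorm {m n : Type*} [Fintype m] [Fintype n] [DecidableEq n]
    (M : Matrix m n ℝ) : ℝ :=
  ∑ i, Real.sqrt ((isHermitian_transpose_mul_self_real M).eigenvalues i)

/-- The largest (real) eigenvalue of a real square matrix, as the supremum of its
real spectrum.  For a symmetric matrix this is its largest eigenvalue. -/
noncomputable def lamMax {n : Type*} [Fintype n] [DecidableEq n] (S : Matrix n n ℝ) : ℝ :=
  sSup (spectrum ℝ S)

/-! Writing `M = ∑ αᵢ yᵢ Φᵢ`, the dual objective splits as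
`∑ αᵢ = ∑ αᵢ (1 - yᵢ Tr(Φᵢᵀ A)) + Tr(Mᵀ A)`. Termwise, `0 ≤ αᵢ ≤ c` bounds the first sum by `c`
times the hinge losses, and the trace duality `Tr(Mᵀ A) ≤ ‖M‖₂ ‖A‖_*` together with `‖M‖₂ ≤ 1`
bounds the second by `‖A‖_*`. -/

open scoped InnerProductSpace

namespace Matrix

variable {m n : Type*} [Fintype m] [Fintype n] [DecidableEq n]

lemma norm_toEuclideanLin_apply_le (M : Matrix m n ℝ) (v : EuclideanSpace ℝ n) :
    ‖toEuclideanLin M v‖ ≤ matSpectralNorm M * ‖v‖ :=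
  (LinearMap.toContinuousLinearMap (toEuclideanLin M)).le_opNorm v

lemma inner_toEuclideanLin_transpose_mul (M A : Matrix m n ℝ) (v w : EuclideanSpace ℝ n) :
    ⟪v, toEuclideanLin (Mᵀ * A) w⟫_ℝ = ⟪toEuclideanLin M v, toEuclideanLin A w⟫_ℝ := by
  classical
  rw [toLpLin_mul_same, ← conjTranspose_eq_transpose_of_trivial,
    toEuclideanLin_conjTranspose_eq_adjoint, LinearMap.comp_apply, LinearMap.adjoint_inner_right]

lemma trace_eq_sum_inner_toEuclideanLin {𝕜 ι : Type*} [RCLike 𝕜] [Fintype ι] (B : Matrix n n 𝕜)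
    (b : OrthonormalBasis ι 𝕜 (EuclideanSpace 𝕜 n)) :
    B.trace = ∑ j, ⟪b j, toEuclideanLin B (b j)⟫_𝕜 := by
  rw [← LinearMap.trace_eq_sum_inner, toEuclideanLin_eq_toLin_orthonormal, trace_toLin_eq]

lemma norm_toEuclideanLin_eigenvectorBasis (A : Matrix m n ℝ) (j : n) :
    ‖toEuclideanLin A ((isHermitian_transpose_mul_self_real A).eigenvectorBasis j)‖ =
      √((isHermitian_transpose_mul_self_real A).eigenvalues j) := by
  set hA := isHermitian_transpose_mul_self_real A
  set v := hA.eigenvectorBasis j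
  have hv : toEuclideanLin (Aᵀ * A) v = hA.eigenvalues j • v := by
    ext i
    simpa [toLpLin_apply] using congrFun (hA.mulVec_eigenvectorBasis j) i
  have hsq : ‖toEuclideanLin A v‖ ^ 2 = hA.eigenvalues j := by
    rw [← real_inner_self_eq_norm_sq, ← inner_toEuclideanLin_transpose_mul, hv,
      real_inner_smul_right, real_inner_self_eq_norm_sq, hA.eigenvectorBasis.orthonormal.1 j,
      one_pow, mul_one]
  rw [← hsq, Real.sqrt_sq (norm_nonneg _)]

lemma nuclearNorm_nonneg (A : Matrix m n ℝ) : 0 ≤ nuclearNorm A :=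
  Finset.sum_nonneg fun _ _ => Real.sqrt_nonneg _

-- The trace form is evaluated in an eigenbasis of `Aᵀ * A`, where `A` stretches the `j`-th
-- basis vector by exactly the `j`-th singular value.
theorem trace_transpose_mul_le_matSpectralNorm_mul_nuclearNorm (M A : Matrix m n ℝ) :
    (Mᵀ * A).trace ≤ matSpectralNorm M * nuclearNorm A := by
  set hA := isHermitian_transpose_mul_self_real A
  set b := hA.eigenvectorBasis
  calc (Mᵀ * A).trace = ∑ j, ⟪toEuclideanLin M (b j), toEuclideanLin A (b j)⟫_ℝ := by
        simp only [trace_eq_sum_inner_toEuclideanLin _ b, inner_toEuclideanLin_transpose_mul]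
    _ ≤ ∑ j, ‖toEuclideanLin M (b j)‖ * ‖toEuclideanLin A (b j)‖ :=
        Finset.sum_le_sum fun j _ => real_inner_le_norm _ _
    _ ≤ ∑ j, matSpectralNorm M * √(hA.eigenvalues j) := by
        refine Finset.sum_le_sum fun j _ => ?_
        rw [norm_toEuclideanLin_eigenvectorBasis]
        gcongr
        simpa [b.orthonormal.1 j] using norm_toEuclideanLin_apply_le M (b j)
    _ = matSpectralNorm M * nuclearNorm A := by rw [nuclearNorm, Finset.mul_sum]

end Matrix

lemma mul_le_mul_max_zero {a c x : ℝ} (ha : 0 ≤ a) (hac : a ≤ c) : a * x ≤ c * max 0 x := by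
  rcases le_total x 0 with hx | hx
  · rw [max_eq_left hx, mul_zero]
    exact mul_nonpos_of_nonneg_of_nonpos ha hx
  · rw [max_eq_right hx]
    exact mul_le_mul_of_nonneg_right hac hx

theorem weak_duality_general (d p n : ℕ)
    (Φ : Fin n → Matrix (Fin d) (Fin p) ℝ) (y : Fin n → ℝ)
    (c : ℝ)
    (α : Fin n → ℝ) (hα0 : ∀ i, 0 ≤ α i) (hαc : ∀ i, α i ≤ c)
    (hfeas : matSpectralNorm (∑ i, (α i * y i) • Φ i) ≤ 1) :
    ∀ A : Matrix (Fin d) (Fin p) ℝ,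
      ∑ i, α i ≤
        nuclearNorm A + c * ∑ i, max 0 (1 - y i * ((Φ i)ᵀ * A).trace) := by
  intro A
  set M := ∑ i, (α i * y i) • Φ i
  have hM : (Mᵀ * A).trace = ∑ i, α i * (y i * ((Φ i)ᵀ * A).trace) := by
    simp only [M, transpose_sum, transpose_smul, Matrix.sum_mul, Matrix.smul_mul, trace_sum,
      trace_smul, smul_eq_mul, mul_assoc]
  have hdual : (Mᵀ * A).trace ≤ nuclearNorm A :=
    (trace_transpose_mul_le_matSpectralNorm_mul_nuclearNorm M A).trans
      (mul_le_of_le_one_left (nuclearNorm_nonneg A) hfeas)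
  have hhinge : ∑ i, α i * (1 - y i * ((Φ i)ᵀ * A).trace) ≤
      c * ∑ i, max 0 (1 - y i * ((Φ i)ᵀ * A).trace) := by
    rw [Finset.mul_sum]
    exact Finset.sum_le_sum fun i _ => mul_le_mul_max_zero (hα0 i) (hαc i)
  calc ∑ i, α i = ∑ i, α i * (1 - y i * ((Φ i)ᵀ * A).trace) + (Mᵀ * A).trace := by
        rw [hM, ← Finset.sum_add_distrib]
        exact Finset.sum_congr rfl fun i _ => by ring
    _ ≤ nuclearNorm A + c * ∑ i, max 0 (1 - y i * ((Φ i)ᵀ * A).trace) := by linarith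

/-- weak duality between the primal CCNN problem with hinge loss and
its dual: any dual-feasible `α` (with `0 ≤ αᵢ ≤ c` and `‖Σᵢ αᵢyᵢΦᵢ‖₂ ≤ 1`) has dual
objective `Σᵢ αᵢ` at most the primal objective of any `A`. -/
theorem weak_duality (d p n : ℕ) (hd : 0 < d) (hp : 0 < p) (hn : 0 < n)
    (Φ : Fin n → Matrix (Fin d) (Fin p) ℝ) (y : Fin n → ℝ)
    (hy : ∀ i, y i = 1 ∨ y i = -1) (c : ℝ) (hc : 0 < c)
    (α : Fin n → ℝ) (hα0 : ∀ i, 0 ≤ α i) (hαc : ∀ i, α i ≤ c)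
    (hfeas : matSpectralNorm (∑ i, (α i * y i) • Φ i) ≤ 1) :
    ∀ A : Matrix (Fin d) (Fin p) ℝ,
      ∑ i, α i ≤
        nuclearNorm A + c * ∑ i, max 0 (1 - y i * ((Φ i)ᵀ * A).trace) :=
  weak_duality_general d p n Φ y c α hα0 hαc hfeas
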